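/- arXiv:2001.07896 — 3 statements merged into one kernel-verified Lean document; each statement's English description precedes it below -/
import Mathlib

section
/- Let f : ℝⁿ → ℝᵐ be a surjective linear mapping. If Y ⊆ ℝᵐ is σ-porous, then f⁻¹(Y) is σ-porous in ℝⁿ. In particular, if f is a linear isomorphism, then f⁻¹(Y) is σ-porous if and only if Y is σ-porous. -/
open Metric Filter Set

/-- γ(x,R,X): sup of radii r ≥ 0 of open balls contained in B_R(x) \ X (sup ∅ = 0). -/
noncomputable def porGamma {E : Type*} [SeminormedAddCommGroup E] (x : E) (R : ℝ) (X : Set E) : ℝ :=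
  sSup {r : ℝ | 0 ≤ r ∧ ∃ x' : E, ball x' r ⊆ ball x R \ X}

/-- Porosity of X at x: liminf_{R→0⁺} γ(x,R,X)/R. -/
noncomputable def porosityAt {E : Type*} [SeminormedAddCommGroup E] (x : E) (X : Set E) : ℝ :=
  liminf (fun R => porGamma x R X / R) (nhdsWithin 0 (Ioi 0))

/-- X is porous if its porosity is positive at each of its points. -/
def IsPorous {E : Type*} [SeminormedAddCommGroup E] (X : Set E) : Prop :=
  ∀ x ∈ X, 0 < porosityAt x X

/-- X is σ-porous if it is a countable union of porous sets. -/
def IsSigmaPorous {E : Type*} [SeminormedAddCommGroup E] (X : Set E) : Prop :=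
  ∃ f : ℕ → Set E, (∀ k, IsPorous (f k)) ∧ X = ⋃ k, f k

/-- Asymptotic cone of X. -/
def asympCone {E : Type*} [SeminormedAddCommGroup E] [NormedSpace ℝ E] (X : Set E) : Set E :=
  {v | ∃ (x : ℕ → E) (t : ℕ → ℝ), (∀ k, x k ∈ X) ∧ (∀ k, 0 < t k) ∧
    Tendsto (fun k => ‖x k‖) atTop atTop ∧ Tendsto (fun k => t k • x k) atTop (nhds v)}

lemma zero_mem_porSet {E : Type*} [SeminormedAddCommGroup E] (x : E) (R : ℝ) (X : Set E) :
    (0:ℝ) ∈ {r : ℝ | 0 ≤ r ∧ ∃ x' : E, ball x' r ⊆ ball x R \ X} :=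
  ⟨le_refl 0, x, by simp⟩

lemma porGamma_nonneg {E : Type*} [SeminormedAddCommGroup E] (x : E) (R : ℝ) (X : Set E) :
    0 ≤ porGamma x R X :=
  Real.sSup_nonneg (fun _ hr => hr.1)

/-- In a nontrivial normed space, a ball of radius r inside a ball of radius R forces r ≤ R. -/
lemma radius_le {E : Type*} [NormedAddCommGroup E] [NormedSpace ℝ E] [Nontrivial E]
    {x x' : E} {r R : ℝ} (hR : 0 < R) (h : ball x' r ⊆ ball x R) : r ≤ R := by
  by_contra hc
  push_neg at hc
  set s : ℝ := (R + r) / 2 with hs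
  have hsR : R < s := by simp only [hs]; linarith
  have hsr : s < r := by simp only [hs]; linarith
  have hs0 : 0 < s := lt_trans hR hsR
  obtain ⟨w, hw⟩ := exists_ne (0 : E)
  have hwn : (0:ℝ) < ‖w‖ := norm_pos_iff.mpr hw
  set v : E := (s / ‖w‖) • w with hv
  have hvn : ‖v‖ = s := by
    rw [hv, norm_smul, Real.norm_eq_abs, abs_of_pos (div_pos hs0 hwn)]
    field_simp
  have h1 : x' + v ∈ ball x' r := by
    rw [mem_ball, dist_eq_norm, show x' + v - x' = v by abel, hvn]
    exact hsr
  have h2 : x' - v ∈ ball x' r := by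
    rw [mem_ball, dist_eq_norm, show x' - v - x' = -v by abel, norm_neg, hvn]
    exact hsr
  have h1' := h h1
  have h2' := h h2
  rw [mem_ball, dist_eq_norm] at h1' h2'
  have : ‖(2:ℝ) • v‖ ≤ ‖x' + v - x‖ + ‖x' - v - x‖ := by
    have : (2:ℝ) • v = (x' + v - x) - (x' - v - x) := by
      rw [two_smul]; abel
    rw [this]
    exact norm_sub_le _ _
  rw [norm_smul] at this
  simp only [Real.norm_ofNat] at this
  rw [hvn] at this
  linarith

/-- In a nontrivial space, porGamma is at most R. -/
lemma porGamma_le {E : Type*} [NormedAddCommGroup E] [NormedSpace ℝ E] [Nontrivial E]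
    (x : E) {R : ℝ} (hR : 0 < R) (X : Set E) : porGamma x R X ≤ R := by
  apply Real.sSup_le _ hR.le
  rintro r ⟨-, x', hx'⟩
  exact radius_le hR (hx'.trans (diff_subset))

/-- porosity at a point of X in a subsingleton space is 0. -/
lemma porosityAt_subsingleton {E : Type*} [NormedAddCommGroup E] [Subsingleton E]
    {x : E} {X : Set E} (hx : x ∈ X) : porosityAt x X = 0 := by
  unfold porosityAt
  have hγ : ∀ R : ℝ, porGamma x R X = 0 := by
    intro R
    apply le_antisymm _ (porGamma_nonneg x R X)
    apply Real.sSup_le _ le_rfl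
    rintro r ⟨hr0, x', hx'⟩
    by_contra hc
    push_neg at hc
    have : x' ∈ ball x' r := mem_ball_self hc
    have := hx' this
    rw [Subsingleton.elim x' x] at this
    exact this.2 hx
  have : (fun R : ℝ => porGamma x R X / R) = fun _ => (0:ℝ) := by
    funext R; rw [hγ, zero_div]
  rw [this, liminf_const]

/-- The key porosity transfer lemma. -/
lemma isPorous_preimage {n m : ℕ}
    (f : EuclideanSpace ℝ (Fin n) →ₗ[ℝ] EuclideanSpace ℝ (Fin m))
    (hf : Function.Surjective f) {Y : Set (EuclideanSpace ℝ (Fin m))}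
    (hY : IsPorous Y) : IsPorous (f ⁻¹' Y) := by
  intro x hx
  have hfx : f x ∈ Y := hx
  have hp : 0 < porosityAt (f x) Y := hY (f x) hfx
  -- exclude the degenerate case
  by_cases htriv : Subsingleton (EuclideanSpace ℝ (Fin m))
  · exact absurd (porosityAt_subsingleton hfx) (ne_of_gt hp)
  have : Nontrivial (EuclideanSpace ℝ (Fin m)) := not_subsingleton_iff_nontrivial.mp htriv
  have : Nontrivial (EuclideanSpace ℝ (Fin n)) := by
    obtain ⟨a, b, hab⟩ := exists_pair_ne (EuclideanSpace ℝ (Fin m))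
    obtain ⟨a', rfl⟩ := hf a
    obtain ⟨b', rfl⟩ := hf b
    exact ⟨a', b', fun h => hab (by rw [h])⟩
  -- constants
  obtain ⟨g, hg⟩ := f.exists_rightInverse_of_surjective (LinearMap.range_eq_top.mpr hf)
  have hgf : ∀ v, f (g v) = v := fun v => DFunLike.congr_fun hg v
  set L : ℝ := ‖LinearMap.toContinuousLinearMap f‖ + 1 with hLdef
  set C : ℝ := ‖LinearMap.toContinuousLinearMap g‖ + 1 with hCdef
  have hL1 : 1 ≤ L := by
    rw [hLdef]; linarith [norm_nonneg (LinearMap.toContinuousLinearMap f)]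
  have hL0 : 0 < L := lt_of_lt_of_le one_pos hL1
  have hC1 : 1 ≤ C := by
    rw [hCdef]; linarith [norm_nonneg (LinearMap.toContinuousLinearMap g)]
  have hC0 : 0 < C := lt_of_lt_of_le one_pos hC1
  have hfb : ∀ u, ‖f u‖ ≤ L * ‖u‖ := by
    intro u
    calc ‖f u‖ = ‖LinearMap.toContinuousLinearMap f u‖ := rfl
    _ ≤ ‖LinearMap.toContinuousLinearMap f‖ * ‖u‖ := (LinearMap.toContinuousLinearMap f).le_opNorm u
    _ ≤ L * ‖u‖ := by apply mul_le_mul_of_nonneg_right _ (norm_nonneg u); simp [hLdef]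
  have hgb : ∀ v, ‖g v‖ ≤ C * ‖v‖ := by
    intro v
    calc ‖g v‖ = ‖LinearMap.toContinuousLinearMap g v‖ := rfl
    _ ≤ ‖LinearMap.toContinuousLinearMap g‖ * ‖v‖ := (LinearMap.toContinuousLinearMap g).le_opNorm v
    _ ≤ C * ‖v‖ := by apply mul_le_mul_of_nonneg_right _ (norm_nonneg v); simp [hCdef]
  -- key sup comparison
  have key : ∀ R : ℝ, 0 < R →
      porGamma (f x) (R / (C + 1)) Y ≤ L * porGamma x R (f ⁻¹' Y) := by
    intro R hR
    have hR' : 0 < R / (C + 1) := div_pos hR (by linarith)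
    apply Real.sSup_le _ (mul_nonneg hL0.le (porGamma_nonneg _ _ _))
    rintro r ⟨hr0, y', hy'⟩
    rcases eq_or_lt_of_le hr0 with h0 | hr0'
    · rw [← h0]; exact mul_nonneg hL0.le (porGamma_nonneg _ _ _)
    -- r > 0
    have hrR' : r ≤ R / (C + 1) := radius_le hR' (hy'.trans diff_subset)
    have hy'fx : ‖y' - f x‖ < R / (C + 1) := by
      have := (hy' (mem_ball_self hr0')).1
      rwa [mem_ball, dist_eq_norm] at this
    set x' : EuclideanSpace ℝ (Fin n) := x + g (y' - f x) with hx'def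
    have hfx' : f x' = y' := by
      rw [hx'def, map_add, hgf]; abel
    have hmem : r / L ∈ {s : ℝ | 0 ≤ s ∧ ∃ z : EuclideanSpace ℝ (Fin n),
        ball z s ⊆ ball x R \ (f ⁻¹' Y)} := by
      refine ⟨div_nonneg hr0 hL0.le, x', fun z hz => ?_⟩
      rw [mem_ball, dist_eq_norm] at hz
      constructor
      · rw [mem_ball, dist_eq_norm]
        have h1 : ‖z - x‖ ≤ ‖z - x'‖ + ‖x' - x‖ := by
          have : z - x = (z - x') + (x' - x) := by abel
          rw [this]; exact norm_add_le _ _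
        have h2 : ‖x' - x‖ ≤ C * ‖y' - f x‖ := by
          rw [hx'def, show x + g (y' - f x) - x = g (y' - f x) by abel]
          exact hgb _
        have h3 : r / L ≤ R / (C + 1) := le_trans (div_le_self hr0 hL1) hrR'
        have h4 : C * ‖y' - f x‖ < C * (R / (C + 1)) :=
          mul_lt_mul_of_pos_left hy'fx hC0
        have h5 : R / (C + 1) + C * (R / (C + 1)) = R := by field_simp; ring
        calc ‖z - x‖ ≤ ‖z - x'‖ + ‖x' - x‖ := h1
        _ < r / L + C * ‖y' - f x‖ := by
            apply add_lt_add_of_lt_of_le hz h2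
        _ < R / (C + 1) + C * (R / (C + 1)) := by
            apply add_lt_add_of_le_of_lt h3 h4
        _ = R := h5
      · -- z ∉ f⁻¹ Y
        intro hzY
        have hfz : ‖f z - y'‖ < r := by
          calc ‖f z - y'‖ = ‖f (z - x')‖ := by rw [map_sub, hfx']
          _ ≤ L * ‖z - x'‖ := hfb _
          _ < L * (r / L) := mul_lt_mul_of_pos_left hz hL0
          _ = r := by field_simp
        have : f z ∈ ball y' r := by rwa [mem_ball, dist_eq_norm]
        exact (hy' this).2 hzY
    -- conclude r ≤ L * sSup
    have hbdd : BddAbove {s : ℝ | 0 ≤ s ∧ ∃ z : EuclideanSpace ℝ (Fin n),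
        ball z s ⊆ ball x R \ (f ⁻¹' Y)} := by
      refine ⟨R, ?_⟩
      rintro s ⟨-, z, hzs⟩
      exact radius_le hR (hzs.trans diff_subset)
    have := le_csSup hbdd hmem
    calc r = L * (r / L) := by field_simp
    _ ≤ L * porGamma x R (f ⁻¹' Y) := mul_le_mul_of_nonneg_left this hL0.le
  -- now handle liminfs
  set p := porosityAt (f x) Y with hpdef
  have hbY : IsBoundedUnder (· ≥ ·) (nhdsWithin (0:ℝ) (Ioi 0))
      (fun R' => porGamma (f x) R' Y / R') := by
    refine ⟨0, eventually_map.mpr ?_⟩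
    filter_upwards [self_mem_nhdsWithin] with R' hR'
    exact div_nonneg (porGamma_nonneg _ _ _) (le_of_lt hR')
  have hplim : p / 2 < liminf (fun R' => porGamma (f x) R' Y / R') (nhdsWithin (0:ℝ) (Ioi 0)) := by
    have : p / 2 < porosityAt (f x) Y := by linarith
    exact this
  have hev : ∀ᶠ R' in nhdsWithin (0:ℝ) (Ioi 0), p / 2 < porGamma (f x) R' Y / R' :=
    eventually_lt_of_lt_liminf hplim hbY
  have htend : Tendsto (fun R : ℝ => R / (C + 1)) (nhdsWithin (0:ℝ) (Ioi 0))
      (nhdsWithin (0:ℝ) (Ioi 0)) := by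
    apply tendsto_nhdsWithin_of_tendsto_nhds_of_eventually_within
    · have : Tendsto (fun R : ℝ => R / (C + 1)) (nhds 0) (nhds (0 / (C + 1))) :=
        (tendsto_id.div_const _)
      rw [zero_div] at this
      exact this.mono_left nhdsWithin_le_nhds
    · filter_upwards [self_mem_nhdsWithin] with R hR
      exact div_pos (mem_Ioi.mp hR) (by linarith)
  have hev2 : ∀ᶠ R in nhdsWithin (0:ℝ) (Ioi 0),
      p / 2 < porGamma (f x) (R / (C + 1)) Y / (R / (C + 1)) := htend.eventually hev
  set c : ℝ := p / (2 * L * (C + 1)) with hcdef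
  have hc0 : 0 < c := by
    apply div_pos hp; positivity
  have hev3 : ∀ᶠ R in nhdsWithin (0:ℝ) (Ioi 0),
      c ≤ porGamma x R (f ⁻¹' Y) / R := by
    filter_upwards [hev2, self_mem_nhdsWithin] with R h2 hR
    have hR : (0:ℝ) < R := hR
    have hR' : 0 < R / (C + 1) := div_pos hR (by linarith)
    have hkey := key R hR
    -- from h2 : p/2 < γY / R'
    have hγY : p / 2 * (R / (C + 1)) < porGamma (f x) (R / (C + 1)) Y := by
      rw [← lt_div_iff₀ hR'] at *
      exact h2
    have : p / 2 * (R / (C + 1)) < L * porGamma x R (f ⁻¹' Y) :=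
      lt_of_lt_of_le hγY hkey
    rw [le_div_iff₀ hR]
    calc c * R = (p / 2 * (R / (C + 1))) / L := by
          rw [hcdef]; field_simp
    _ ≤ porGamma x R (f ⁻¹' Y) := by
          rw [div_le_iff₀ hL0]
          calc p / 2 * (R / (C + 1)) ≤ L * porGamma x R (f ⁻¹' Y) := this.le
          _ = porGamma x R (f ⁻¹' Y) * L := mul_comm _ _
  have hcob : IsCoboundedUnder (· ≥ ·) (nhdsWithin (0:ℝ) (Ioi 0))
      (fun R => porGamma x R (f ⁻¹' Y) / R) := by
    apply IsBoundedUnder.isCoboundedUnder_ge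
    refine ⟨1, eventually_map.mpr ?_⟩
    filter_upwards [self_mem_nhdsWithin] with R hR
    have hR : (0:ℝ) < R := hR
    have := porGamma_le x hR (f ⁻¹' Y)
    rw [div_le_one hR]
    exact this
  have : c ≤ porosityAt x (f ⁻¹' Y) := le_liminf_of_le hcob hev3
  exact lt_of_lt_of_le hc0 this

lemma isSigmaPorous_preimage {n m : ℕ}
    (f : EuclideanSpace ℝ (Fin n) →ₗ[ℝ] EuclideanSpace ℝ (Fin m))
    (hf : Function.Surjective f) {Y : Set (EuclideanSpace ℝ (Fin m))}
    (hY : IsSigmaPorous Y) : IsSigmaPorous (f ⁻¹' Y) := by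
  obtain ⟨s, hs, rfl⟩ := hY
  exact ⟨fun k => f ⁻¹' s k, fun k => isPorous_preimage f hf (hs k), by
    rw [preimage_iUnion]⟩

/-- The preimage of a σ-porous set under a surjective linear map is σ-porous;
if moreover the map is injective (hence a linear isomorphism), this is an equivalence. -/
theorem sigmaPorous_preimage {n m : ℕ}
    (f : EuclideanSpace ℝ (Fin n) →ₗ[ℝ] EuclideanSpace ℝ (Fin m))
    (hf : Function.Surjective f) (Y : Set (EuclideanSpace ℝ (Fin m))) :
    (IsSigmaPorous Y → IsSigmaPorous (f ⁻¹' Y)) ∧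
    (Function.Injective f → (IsSigmaPorous (f ⁻¹' Y) ↔ IsSigmaPorous Y)) := by
  constructor
  · exact fun h => isSigmaPorous_preimage f hf h
  · intro hinj
    constructor
    · intro h
      set e := LinearEquiv.ofBijective f ⟨hinj, hf⟩ with hedef
      have hsurj : Function.Surjective (e.symm.toLinearMap) := e.symm.surjective
      have hYeq : Y = e.symm.toLinearMap ⁻¹' (f ⁻¹' Y) := by
        ext y
        simp only [mem_preimage, LinearEquiv.coe_coe]
        have : f (e.symm y) = y := by
          have : f (e.symm y) = e (e.symm y) := rfl
          rw [this, LinearEquiv.apply_symm_apply]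
        rw [this]
      rw [hYeq]
      exact isSigmaPorous_preimage e.symm.toLinearMap hsurj h
    · exact fun h => isSigmaPorous_preimage f hf h
end

section
/- The set of linear maps T : ℝⁿ → ℝᵐ that do not have maximal rank (i.e., rank(T) < min(m,n)) is porous in L(ℝⁿ, ℝᵐ). -/
open Metric Filter Set

open Module
open scoped Topology

/-!
Write `T = U ∘ D` with `D` diagonal in an eigenbasis of `T†T` (entries `‖T bᵢ‖ ≥ 0`) and `U` an
isometric embedding; this needs `dim E ≤ dim F`, the other case follows by taking adjoints.
Then `S = T + εU = U ∘ (D + ε)` satisfies `‖S - T‖ ≤ ε` and `‖S x‖ ≥ ε ‖x‖`, so every map in the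
`ε`-ball around `S` is injective, hence of maximal rank. Taking `ε = R / 2`, every `R`-ball around
a map of non-maximal rank contains an `R / 2`-ball of maps of maximal rank: the porosity is at
least `1 / 2`.
-/

section Porosity

variable {E : Type*} [SeminormedAddCommGroup E] {X : Set E} {x y : E} {r R : ℝ}

theorem lt_of_ball_subset_ball_diff (hx : x ∈ X) (hr : 0 < r) (h : ball y r ⊆ ball x R \ X) :
    r < R := by
  have hyx : dist y x < R := (h (mem_ball_self hr)).1
  have hxy : r ≤ dist x y := not_lt.mp fun hxy => (h hxy).2 hx
  linarith [dist_comm x y]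

theorem porGamma_le_s8 (hx : x ∈ X) (hR : 0 ≤ R) : porGamma x R X ≤ R :=
  Real.sSup_le (fun _ ⟨hr, _, h⟩ => hr.eq_or_lt.elim (· ▸ hR) fun hr =>
    (lt_of_ball_subset_ball_diff hx hr h).le) hR

theorem le_porGamma (hx : x ∈ X) (hr : 0 ≤ r) (hR : 0 ≤ R) (h : ball y r ⊆ ball x R \ X) :
    r ≤ porGamma x R X :=
  le_csSup ⟨R, fun _ ⟨hr', _, h'⟩ => hr'.eq_or_lt.elim (· ▸ hR) fun hr' =>
    (lt_of_ball_subset_ball_diff hx hr' h').le⟩ ⟨hr, y, h⟩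

theorem le_porosityAt {c : ℝ} (hx : x ∈ X) (hc : 0 ≤ c)
    (h : ∀ R > 0, ∃ y, ball y (c * R) ⊆ ball x R \ X) : c ≤ porosityAt x X := by
  have hpos : ∀ᶠ R in 𝓝[>] (0 : ℝ), 0 < R := self_mem_nhdsWithin
  refine le_liminf_of_le (isCoboundedUnder_ge_of_eventually_le (x := 1) _
    (hpos.mono fun R hR => ?_)) (hpos.mono fun R hR => ?_)
  · exact (div_le_one hR).mpr (porGamma_le_s8 hx hR.le)
  · obtain ⟨y, hy⟩ := h R hR
    exact (le_div_iff₀ hR).mpr (le_porGamma hx (by positivity) hR.le hy)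

theorem isPorous_of_forall_exists_disjoint_ball {K : ℝ} (hK : 0 ≤ K)
    (h : ∀ x ∈ X, ∀ ε > 0, ∃ y, dist y x ≤ K * ε ∧ Disjoint (ball y ε) X) : IsPorous X := by
  intro x hx
  refine lt_of_lt_of_le (by positivity : 0 < (K + 1)⁻¹) (le_porosityAt hx (by positivity)
    fun R hR => ?_)
  obtain ⟨y, hyx, hyX⟩ := h x hx ((K + 1)⁻¹ * R) (by positivity)
  refine ⟨y, fun z hz => ⟨?_, hyX.notMem_of_mem_left hz⟩⟩
  calc dist z x ≤ dist z y + dist y x := dist_triangle z y x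
    _ < (K + 1)⁻¹ * R + K * ((K + 1)⁻¹ * R) := add_lt_add_of_lt_of_le hz hyx
    _ = R := by field_simp; ring

end Porosity

theorem Orthonormal.exists_orthonormal_extension_of_card_le {𝕜 F : Type*} [RCLike 𝕜]
    [NormedAddCommGroup F] [InnerProductSpace 𝕜 F] [FiniteDimensional 𝕜 F]
    {ι : Type*} [Fintype ι] (h : Fintype.card ι ≤ finrank 𝕜 F) {v : ι → F} {s : Set ι}
    (hv : Orthonormal 𝕜 (s.domRestrict v)) :
    ∃ e : ι → F, Orthonormal 𝕜 e ∧ ∀ i ∈ s, e i = v i := by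
  -- pad `ι` with dummy indices to an index type of cardinality `finrank 𝕜 F`
  let w : ι ⊕ Fin (finrank 𝕜 F - Fintype.card ι) → F := Sum.elim v 0
  let g := Equiv.Set.image Sum.inl s (Sum.inl_injective (β := Fin (finrank 𝕜 F - Fintype.card ι)))
  have hw : (Sum.inl '' s).domRestrict w = s.domRestrict v ∘ g.symm := by
    rw [Equiv.eq_comp_symm]; rfl
  obtain ⟨b, hb⟩ := Orthonormal.exists_orthonormalBasis_extension_of_card_eq
    (by simp; omega) (hw ▸ hv.comp _ g.symm.injective)
  exact ⟨b ∘ Sum.inl, b.orthonormal.comp _ Sum.inl_injective,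
    fun i hi => hb _ (Set.mem_image_of_mem _ hi)⟩

section InnerProductSpace

variable {E F : Type*} [NormedAddCommGroup E] [InnerProductSpace ℝ E]
  [NormedAddCommGroup F] [InnerProductSpace ℝ F]

theorem norm_le_norm_add_of_inner_nonneg {v w : E} (h : 0 ≤ inner ℝ v w) : ‖w‖ ≤ ‖v + w‖ := by
  refine le_of_sq_le_sq ?_ (norm_nonneg _)
  nlinarith [norm_add_sq_real v w, sq_nonneg ‖v‖]

theorem LinearMap.inner_map_map_eq_zero_of_adjoint_comp_self_apply [FiniteDimensional ℝ E]
    [FiniteDimensional ℝ F] (T : E →ₗ[ℝ] F) {x y : E} {μ : ℝ} (hxy : inner ℝ x y = 0)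
    (hy : (T.adjoint ∘ₗ T) y = μ • y) : inner ℝ (T x) (T y) = 0 := by
  rw [← T.adjoint_inner_right, ← LinearMap.comp_apply, hy, real_inner_smul_right, hxy, mul_zero]

theorem ContinuousLinearMap.injective_of_norm_sub_lt {S P : E →L[ℝ] F} {ε : ℝ}
    (hS : ∀ x, ε * ‖x‖ ≤ ‖S x‖) (hP : ‖P - S‖ < ε) : Function.Injective P := by
  refine (injective_iff_map_eq_zero P).mpr fun x hx => norm_le_zero_iff.mp ?_
  have : ε * ‖x‖ ≤ ‖P - S‖ * ‖x‖ := calc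
    ε * ‖x‖ ≤ ‖S x‖ := hS x
    _ = ‖(P - S) x‖ := by simp [hx]
    _ ≤ ‖P - S‖ * ‖x‖ := (P - S).le_opNorm x
  nlinarith [norm_nonneg x]

variable [FiniteDimensional ℝ E] [FiniteDimensional ℝ F]

theorem LinearMap.exists_orthonormalBasis_linearIsometry_apply_eq_smul (T : E →ₗ[ℝ] F)
    (h : finrank ℝ E ≤ finrank ℝ F) :
    ∃ (b : OrthonormalBasis (Fin (finrank ℝ E)) ℝ E) (U : E →ₗᵢ[ℝ] F)
      (σ : Fin (finrank ℝ E) → ℝ), (∀ i, 0 ≤ σ i) ∧ ∀ i, T (b i) = σ i • U (b i) := by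
  have hA := T.isPositive_adjoint_comp_self.isSymmetric
  set b := hA.eigenvectorBasis rfl
  have hv : Orthonormal ℝ ({i | T (b i) ≠ 0}.domRestrict fun i => ‖T (b i)‖⁻¹ • T (b i)) := by
    refine ⟨fun ⟨i, hi⟩ => norm_smul_inv_norm hi, fun ⟨i, _⟩ ⟨j, _⟩ hij => ?_⟩
    have hTij := T.inner_map_map_eq_zero_of_adjoint_comp_self_apply
      (b.orthonormal.inner_eq_zero (Subtype.coe_ne_coe.mpr hij)) (hA.apply_eigenvectorBasis rfl j)
    simp only [Set.domRestrict_apply, real_inner_smul_left, real_inner_smul_right, hTij, mul_zero]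
  obtain ⟨e, he, hev⟩ := hv.exists_orthonormal_extension_of_card_le (by simpa using h)
  have hbe : ∀ i, b.toBasis.constr ℝ e (b i) = e i := fun i => by simp
  let U := (b.toBasis.constr ℝ e).isometryOfOrthonormal (v := b.toBasis)
    (by simp) (by simpa [Function.comp_def, hbe] using he)
  refine ⟨b, U, fun i => ‖T (b i)‖, fun i => norm_nonneg _, fun i => ?_⟩
  by_cases hi : T (b i) = 0
  · simp [hi]
  · rw [show U (b i) = e i from hbe i, hev i hi, smul_smul,
      mul_inv_cancel₀ (norm_ne_zero_iff.mpr hi), one_smul]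

theorem LinearMap.exists_linearIsometry_inner_nonneg (T : E →ₗ[ℝ] F)
    (h : finrank ℝ E ≤ finrank ℝ F) : ∃ U : E →ₗᵢ[ℝ] F, ∀ x, 0 ≤ inner ℝ (T x) (U x) := by
  obtain ⟨b, U, σ, hσ, hTU⟩ := T.exists_orthonormalBasis_linearIsometry_apply_eq_smul h
  refine ⟨U, fun x => ?_⟩
  have hTx : T x = ∑ i, (inner ℝ (b i) x * σ i) • U (b i) := by
    conv_lhs => rw [← b.sum_repr' x]
    simp only [map_sum, map_smul, hTU, smul_smul]
  have hUx : U x = ∑ i, inner ℝ (b i) x • U (b i) := by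
    conv_lhs => rw [← b.sum_repr' x]
    simp only [map_sum, map_smul]
  have hUb : Orthonormal ℝ fun i => U (b i) := b.orthonormal.comp_linearIsometry U
  rw [hTx, hUx, hUb.inner_sum]
  exact Finset.sum_nonneg fun i _ => by
    simpa [mul_right_comm] using mul_nonneg (mul_self_nonneg (inner ℝ (b i) x)) (hσ i)

theorem ContinuousLinearMap.exists_dist_le_forall_mem_ball_injective (T : E →L[ℝ] F)
    (h : finrank ℝ E ≤ finrank ℝ F) {ε : ℝ} (hε : 0 ≤ ε) :
    ∃ S : E →L[ℝ] F, dist S T ≤ ε ∧ ∀ P ∈ ball S ε, Function.Injective P := by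
  obtain ⟨U, hTU⟩ := (T : E →ₗ[ℝ] F).exists_linearIsometry_inner_nonneg h
  refine ⟨T + ε • U.toContinuousLinearMap, ?_,
    fun P hP => injective_of_norm_sub_lt ?_ (mem_ball_iff_norm.mp hP)⟩
  · rw [dist_eq_norm, add_sub_cancel_left, norm_smul, Real.norm_of_nonneg hε]
    exact mul_le_of_le_one_right hε U.norm_toContinuousLinearMap_le
  · intro x
    calc ε * ‖x‖ = ‖ε • U x‖ := by rw [norm_smul, U.norm_map, Real.norm_of_nonneg hε]
      _ ≤ ‖T x + ε • U x‖ := norm_le_norm_add_of_inner_nonneg <| by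
        rw [real_inner_smul_right]; exact mul_nonneg hε (hTU x)

theorem ContinuousLinearMap.exists_dist_le_forall_mem_ball_min_finrank_le (T : E →L[ℝ] F)
    {ε : ℝ} (hε : 0 ≤ ε) :
    ∃ S : E →L[ℝ] F, dist S T ≤ ε ∧
      ∀ P ∈ ball S ε, min (finrank ℝ F) (finrank ℝ E) ≤ finrank ℝ (P : E →ₗ[ℝ] F).range := by
  rcases le_total (finrank ℝ E) (finrank ℝ F) with h | h
  · obtain ⟨S, hST, hS⟩ := T.exists_dist_le_forall_mem_ball_injective h hε
    refine ⟨S, hST, fun P hP => ?_⟩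
    rw [LinearMap.finrank_range_of_inj (hS P hP)]
    exact min_le_right _ _
  · obtain ⟨S, hST, hS⟩ := (adjoint T).exists_dist_le_forall_mem_ball_injective h hε
    have hdist (A : E →L[ℝ] F) (B : F →L[ℝ] E) : dist (adjoint B) A = dist B (adjoint A) := by
      rw [← adjoint.dist_map, adjoint_adjoint]
    refine ⟨adjoint S, hdist T S ▸ hST, fun P hP => ?_⟩
    have hP' : adjoint P ∈ ball S ε := by
      rwa [mem_ball, dist_comm, ← hdist, dist_comm]
    rw [← LinearMap.finrank_range_adjoint, adjoint_toLinearMap,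
      LinearMap.finrank_range_of_inj (hS _ hP')]
    exact min_le_left _ _

end InnerProductSpace

/-- The set of continuous linear maps T : ℝⁿ → ℝᵐ not of maximal rank is porous in L(ℝⁿ, ℝᵐ). -/
theorem nonMaximalRank_porous {n m : ℕ} :
    IsPorous {T : EuclideanSpace ℝ (Fin n) →L[ℝ] EuclideanSpace ℝ (Fin m) |
      Module.finrank ℝ (LinearMap.range (T : EuclideanSpace ℝ (Fin n) →ₗ[ℝ] EuclideanSpace ℝ (Fin m))) < min m n} := by
  refine isPorous_of_forall_exists_disjoint_ball zero_le_one fun T _ ε hε => ?_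
  obtain ⟨S, hST, hS⟩ := T.exists_dist_le_forall_mem_ball_min_finrank_le hε.le
  refine ⟨S, by rwa [one_mul], Set.disjoint_left.mpr fun P hP hPX => ?_⟩
  have hP := hS P hP
  simp only [finrank_euclideanSpace_fin] at hP
  exact not_lt.mpr hP hPX
end

section
/- Let X ⊆ ℝⁿ be a closed convex set, Y := aff(C_∞X), and T : ℝⁿ → ℝᵐ a linear map with rank(T|_Y) = m and ri(C_∞X) ∩ ker(T) ≠ ∅. Then there exists an open neighborhood N of T in L(ℝⁿ, ℝᵐ) such that for every S ∈ N, ri(C_∞X) ∩ ker(S) ≠ ∅ and S(X) is closed in ℝᵐ. -/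
open Metric Filter Set

/-!
Since `T` maps `Y = aff (C_∞X)` onto `ℝᵐ`, it has a continuous right inverse `σ` with values in
`Y`, and for `S` near `T` the map `σ ∘ (S ∘ σ)⁻¹` is a right inverse of `S` with values in `Y`
that depends continuously on `S`. Correcting a point `z ∈ ri (C_∞X) ∩ ker T` by it gives points
of `Y ∩ ker S` converging to `z` as `S → T`, hence lying in `ri (C_∞X)`.

A point `w ∈ ri (C_∞X) ∩ ker S` forces `S(X) = ℝᵐ` once `S(Y) = ℝᵐ`: for `u ∈ Y` and small
`t > 0` the vector `w / t + u` lies in `C_∞X`, so `x + w / t + u ∈ X` for every `x ∈ X`, and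
`S` maps it to `S x + S u`.
-/

open Topology

theorem smul_mem_asympCone {E : Type*} [SeminormedAddCommGroup E] [NormedSpace ℝ E] {X : Set E}
    {v : E} (hv : v ∈ asympCone X) {c : ℝ} (hc : 0 < c) : c • v ∈ asympCone X := by
  obtain ⟨xs, ts, hxs, hts, hnorm, hlim⟩ := hv
  exact ⟨xs, fun k => c * ts k, hxs, fun k => mul_pos hc (hts k), hnorm,
    by simpa [mul_smul] using hlim.const_smul c⟩

theorem nonempty_of_mem_asympCone {E : Type*} [SeminormedAddCommGroup E] [NormedSpace ℝ E]
    {X : Set E} {v : E} (hv : v ∈ asympCone X) : X.Nonempty := by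
  obtain ⟨xs, -, hxs, -⟩ := hv
  exact ⟨xs 0, hxs 0⟩

/-- The convex combinations `(1 - t_k) x + t_k x_k ∈ X` converge to `x + v`, since `t_k → 0`. -/
theorem Convex.add_mem_of_mem_asympCone {E : Type*} [NormedAddCommGroup E] [NormedSpace ℝ E]
    {X : Set E} (hconv : Convex ℝ X) (hX : IsClosed X) {x v : E} (hx : x ∈ X)
    (hv : v ∈ asympCone X) : x + v ∈ X := by
  obtain ⟨xs, ts, hxs, hts, hnorm, hlim⟩ := hv
  have ht0 : Tendsto ts atTop (𝓝 0) := by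
    refine (hlim.norm.div_atTop hnorm).congr' ?_
    filter_upwards [hnorm.eventually_gt_atTop 0] with k hk
    rw [norm_smul, Real.norm_of_nonneg (hts k).le, mul_div_cancel_right₀ _ hk.ne']
  have hcomb : Tendsto (fun k => (1 - ts k) • x + ts k • xs k) atTop (𝓝 (x + v)) := by
    simpa using (((tendsto_const_nhds (x := (1 : ℝ))).sub ht0).smul_const x).add hlim
  refine hX.mem_of_tendsto hcomb ?_
  filter_upwards [ht0.eventually (gt_mem_nhds one_pos)] with k hk
  exact hconv hx (hxs k) (by linarith [hts k]) (hts k).le (by ring)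

section IntrinsicInterior

variable {E : Type*} [NormedAddCommGroup E] [NormedSpace ℝ E] {s : Set E} {w : E}

theorem intrinsicInterior_mem_nhdsWithin (hw : w ∈ intrinsicInterior ℝ s) :
    intrinsicInterior ℝ s ∈ 𝓝[affineSpan ℝ s] w := by
  obtain ⟨p, hp, rfl⟩ := mem_intrinsicInterior.mp hw
  rw [nhdsWithin_eq_map_subtype_coe p.2]
  exact image_mem_map (isOpen_interior.mem_nhds hp)

theorem exists_pos_add_smul_mem_of_mem_intrinsicInterior (hw : w ∈ intrinsicInterior ℝ s)
    {v : E} (hv : v ∈ (affineSpan ℝ s).direction) : ∃ t > (0 : ℝ), w + t • v ∈ s := by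
  obtain ⟨p, -, rfl⟩ := mem_intrinsicInterior.mp hw
  have hpath : Tendsto (fun t : ℝ => (p : E) + t • v) (𝓝[>] 0) (𝓝[affineSpan ℝ s] p) := by
    refine tendsto_nhdsWithin_iff.mpr ⟨?_, Eventually.of_forall fun t => ?_⟩
    · have : Continuous fun t : ℝ => (p : E) + t • v := by fun_prop
      simpa using (this.tendsto 0).mono_left nhdsWithin_le_nhds
    · rw [add_comm, ← vadd_eq_add]
      exact AffineSubspace.vadd_mem_of_mem_direction (Submodule.smul_mem _ t hv) p.2
  exact ((hpath.eventually (mem_of_superset (intrinsicInterior_mem_nhdsWithin hw)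
    intrinsicInterior_subset)).and self_mem_nhdsWithin).exists.imp fun t h => ⟨h.2, h.1⟩

end IntrinsicInterior

theorem image_eq_univ_of_mem_intrinsicInterior_asympCone {E F : Type*} [NormedAddCommGroup E]
    [NormedSpace ℝ E] [AddCommGroup F] [Module ℝ F] {X : Set E} (hconv : Convex ℝ X)
    (hX : IsClosed X) {S : E →ₗ[ℝ] F} {w : E} (hw : w ∈ intrinsicInterior ℝ (asympCone X))
    (hSw : S w = 0) (hS : (affineSpan ℝ (asympCone X)).direction.map S = ⊤) : S '' X = univ := by
  obtain ⟨x, hx⟩ := nonempty_of_mem_asympCone (intrinsicInterior_subset hw)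
  refine eq_univ_of_forall fun y => ?_
  obtain ⟨u, hu, hSu⟩ : ∃ u ∈ (affineSpan ℝ (asympCone X)).direction, S u = y - S x := by
    simpa using hS.ge (Submodule.mem_top (x := y - S x))
  obtain ⟨t, ht, hwu⟩ := exists_pos_add_smul_mem_of_mem_intrinsicInterior hw hu
  refine ⟨x + t⁻¹ • (w + t • u),
    hconv.add_mem_of_mem_asympCone hX hx (smul_mem_asympCone hwu (inv_pos.mpr ht)), ?_⟩
  rw [map_add, map_smul, map_add, hSw, map_smul, hSu, zero_add, inv_smul_smul₀ ht.ne',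
    add_sub_cancel]

section Perturbation

variable {𝕜 E F : Type*} [NontriviallyNormedField 𝕜] [CompleteSpace 𝕜] [NormedAddCommGroup E]
  [NormedSpace 𝕜 E] [NormedAddCommGroup F] [NormedSpace 𝕜 F] [FiniteDimensional 𝕜 F]
  {Y : Submodule 𝕜 E} {T : E →L[𝕜] F}

theorem Submodule.exists_rightInverse_continuousAt_of_map_eq_top
    (hT : Y.map (T : E →ₗ[𝕜] F) = ⊤) :
    ∃ ρ : (E →L[𝕜] F) → (F →L[𝕜] E), ContinuousAt ρ T ∧ (∀ S y, ρ S y ∈ Y) ∧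
      ∀ᶠ S in 𝓝 T, S ∘L ρ S = ContinuousLinearMap.id 𝕜 F := by
  have hsurj : LinearMap.range ((T : E →ₗ[𝕜] F) ∘ₗ Y.subtype) = ⊤ := by
    rwa [LinearMap.range_comp, Submodule.range_subtype]
  obtain ⟨σ₀, hσ₀⟩ := ((T : E →ₗ[𝕜] F) ∘ₗ Y.subtype).exists_rightInverse_of_surjective hsurj
  have := FiniteDimensional.complete 𝕜 F
  set σ : F →L[𝕜] E := Y.subtypeL ∘L LinearMap.toContinuousLinearMap σ₀
  have hTσ : T ∘L σ = 1 := ContinuousLinearMap.ext fun y => LinearMap.congr_fun hσ₀ y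
  have hcomp : Continuous fun S : E →L[𝕜] F => S ∘L σ := by fun_prop
  refine ⟨fun S => σ ∘L Ring.inverse (S ∘L σ), ?_, fun S y => Submodule.coe_mem _, ?_⟩
  · have hinv : ContinuousAt Ring.inverse (T ∘L σ) := by
      rw [hTσ]; exact NormedRing.inverse_continuousAt 1
    exact continuousAt_const.clm_comp (hinv.comp (f := fun S => S ∘L σ) hcomp.continuousAt)
  · have hunit : ∀ᶠ S in 𝓝 T, IsUnit (S ∘L σ) :=
      hcomp.continuousAt.eventually_mem (Units.isOpen.mem_nhds (by rw [hTσ]; exact isUnit_one))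
    filter_upwards [hunit] with S hS
    rw [← ContinuousLinearMap.comp_assoc, ← ContinuousLinearMap.mul_def,
      Ring.mul_inverse_cancel _ hS, ContinuousLinearMap.one_def]

theorem Submodule.eventually_map_eq_top (hT : Y.map (T : E →ₗ[𝕜] F) = ⊤) :
    ∀ᶠ S : E →L[𝕜] F in 𝓝 T, Y.map (S : E →ₗ[𝕜] F) = ⊤ := by
  obtain ⟨ρ, -, hρY, hρ⟩ := Y.exists_rightInverse_continuousAt_of_map_eq_top hT
  filter_upwards [hρ] with S hS
  exact eq_top_iff.mpr fun y _ => ⟨ρ S y, hρY S y, by simpa using congr($hS y)⟩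

theorem Submodule.eventually_exists_mem_ker_of_map_eq_top (hT : Y.map (T : E →ₗ[𝕜] F) = ⊤)
    {z : E} (hz : z ∈ Y) (hTz : T z = 0) {U : Set E} (hU : U ∈ 𝓝[Y] z) :
    ∀ᶠ S in 𝓝 T, ∃ w ∈ U, S w = 0 := by
  obtain ⟨ρ, hρT, hρY, hρ⟩ := Y.exists_rightInverse_continuousAt_of_map_eq_top hT
  have hcorr : Tendsto (fun S => z - ρ S (S z)) (𝓝 T) (𝓝[Y] z) := by
    refine tendsto_nhdsWithin_iff.mpr ⟨?_, Eventually.of_forall fun S => Y.sub_mem hz (hρY S _)⟩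
    have : ContinuousAt (fun S : E →L[𝕜] F => z - ρ S (S z)) T :=
      continuousAt_const.sub (hρT.clm_apply (by fun_prop))
    simpa [hTz] using this.tendsto
  filter_upwards [hcorr hU, hρ] with S hSU hS
  exact ⟨_, hSU, by simpa [sub_eq_zero] using congr($hS (S z)).symm⟩

end Perturbation

/-- If X is closed convex, T|_{aff(C_∞X)} has rank m and ker T meets ri(C_∞X), then the same
holds on an open neighborhood of T, on which images of X are closed. -/
theorem ri_meets_ker_stable {n m : ℕ} (X : Set (EuclideanSpace ℝ (Fin n)))
    (hX : IsClosed X) (hconv : Convex ℝ X)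
    (Y : Submodule ℝ (EuclideanSpace ℝ (Fin n)))
    (hY : (Y : Set (EuclideanSpace ℝ (Fin n))) = (affineSpan ℝ (asympCone X) : Set (EuclideanSpace ℝ (Fin n))))
    (T : EuclideanSpace ℝ (Fin n) →L[ℝ] EuclideanSpace ℝ (Fin m))
    (hrank : Module.finrank ℝ (Y.map (T : EuclideanSpace ℝ (Fin n) →ₗ[ℝ] EuclideanSpace ℝ (Fin m))) = m)
    (hri : (intrinsicInterior ℝ (asympCone X) ∩ (LinearMap.ker (T : EuclideanSpace ℝ (Fin n) →ₗ[ℝ] EuclideanSpace ℝ (Fin m)) : Set (EuclideanSpace ℝ (Fin n)))).Nonempty) :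
    ∃ N : Set (EuclideanSpace ℝ (Fin n) →L[ℝ] EuclideanSpace ℝ (Fin m)),
      IsOpen N ∧ T ∈ N ∧ ∀ S ∈ N,
        (intrinsicInterior ℝ (asympCone X) ∩ (LinearMap.ker (S : EuclideanSpace ℝ (Fin n) →ₗ[ℝ] EuclideanSpace ℝ (Fin m)) : Set (EuclideanSpace ℝ (Fin n)))).Nonempty ∧
        IsClosed (S '' X) := by
  obtain ⟨z, hz, hTz⟩ := hri
  have hspan : affineSpan ℝ (asympCone X) = Y.toAffineSubspace := SetLike.coe_injective hY.symm
  have hYT : Y.map (T : EuclideanSpace ℝ (Fin n) →ₗ[ℝ] EuclideanSpace ℝ (Fin m)) = ⊤ :=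
    Submodule.eq_top_of_finrank_eq (by rw [hrank, finrank_euclideanSpace_fin])
  have hzY : z ∈ Y := by
    simpa [← SetLike.mem_coe, hY] using subset_affineSpan ℝ _ (intrinsicInterior_subset hz)
  have hri_nhds : intrinsicInterior ℝ (asympCone X) ∈ 𝓝[Y] z := by
    simpa [hY] using intrinsicInterior_mem_nhdsWithin hz
  obtain ⟨N, hN, hNopen, hTN⟩ := _root_.eventually_nhds_iff.mp ((Y.eventually_map_eq_top hYT).and
    (Y.eventually_exists_mem_ker_of_map_eq_top hYT hzY hTz hri_nhds))
  refine ⟨N, hNopen, hTN, fun S hS => ?_⟩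
  obtain ⟨hSY, w, hw, hSw⟩ := hN S hS
  refine ⟨⟨w, hw, hSw⟩, ?_⟩
  rw [← ContinuousLinearMap.coe_coe, image_eq_univ_of_mem_intrinsicInterior_asympCone hconv hX
    hw hSw (by rwa [hspan, Submodule.toAffineSubspace_direction])]
  exact isClosed_univ
end
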